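/- arXiv:1902.09806 — 3 statements merged into one kernel-verified Lean document; each statement's English description precedes it below -/
import Mathlib

section
/- Let α ∈ (0,1), h > 0, t_j = jh, n ≥ 1. There exists a function f ∈ C²([0, t_{n+1}]) with |f''| ≤ 1 such that the error of replacing f by its linear interpolant at nodes t_{n−1}, t_n in the integral (1/Γ(α)) ∫_0^{t_{n+1}} (t_{n+1}−λ)^{α−1} f(λ) dλ is bounded below by c · t_{n+1}^{2+α} for a positive constant c depending only on α; concretely f(λ) = (λ − t_n)(λ − t_{n−1})/2 realizes such a lower bound. -/
/-!
The linear interpolant of `f λ = (λ - t_n)(λ - t_{n-1}) / 2` at its own roots `t_{n-1}, t_n` is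
zero, so the quadrature error is the whole fractional integral of `f`. Substituting
`x = t_{n+1} - λ` turns it into `½ ∫₀ᵀ x^(α-1) (x - h)(x - 2h) dx` with `T = t_{n+1}`, i.e.
`½ T^α (T²/(α+2) - 3hT/(α+1) + 2h²/α)`. For `α < 2` this quadratic form in `(T, h)` is positive
definite, so it is at least `m(α) T²` with `m(α) > 0`, uniformly in `h` and `n`.
-/

open Real intervalIntegral

theorem deriv_mul_sub_div_two (a b : ℝ) :
    deriv (fun l : ℝ => (l - a) * (l - b) / 2) = fun l => l - (a + b) / 2 := by
  funext l
  exact ((((hasDerivAt_id l).sub_const a).mul ((hasDerivAt_id l).sub_const b)).div_const 2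
    |>.congr_deriv (by simp only [id]; ring)).deriv

theorem iteratedDeriv_two_mul_sub_div_two (a b x : ℝ) :
    iteratedDeriv 2 (fun l : ℝ => (l - a) * (l - b) / 2) x = 1 := by
  rw [iteratedDeriv_succ, iteratedDeriv_one, deriv_mul_sub_div_two]
  exact ((hasDerivAt_id x).sub_const _).deriv

theorem integral_rpow_mul_sub_mul_sub {α T : ℝ} (hα : 0 < α) (hT : 0 ≤ T) (a b : ℝ) :
    ∫ x in (0 : ℝ)..T, x ^ (α - 1) * ((x - a) * (x - b))
      = T ^ α * (T ^ 2 / (α + 2) - (a + b) * T / (α + 1) + a * b / α) := by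
  have hsplit : ∀ x : ℝ, 0 ≤ x → x ^ (α - 1) * ((x - a) * (x - b))
      = x ^ (α + 1) - (a + b) * x ^ α + a * b * x ^ (α - 1) := by
    intro x hx
    have h2 : x ^ (α + 1) = x ^ (α - 1) * x ^ 2 := by
      rw [← rpow_natCast, ← rpow_add' hx (by norm_num; linarith)]
      norm_num; ring_nf
    have h1 : x ^ α = x ^ (α - 1) * x := by
      rw [← rpow_add_one' hx (by linarith)]
      ring_nf
    rw [h2, h1]
    ring
  have hint : ∀ β : ℝ, -1 < β → IntervalIntegrable (fun x : ℝ => x ^ β) MeasureTheory.volume 0 T :=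
    fun β hβ => intervalIntegrable_rpow' hβ
  rw [integral_congr (g := fun x => x ^ (α + 1) - (a + b) * x ^ α + a * b * x ^ (α - 1))
      fun x hx => hsplit x (by rw [Set.uIcc_of_le hT] at hx; exact hx.1),
    integral_add (((hint _ (by linarith)).sub ((hint _ (by linarith)).const_mul _)))
      ((hint _ (by linarith)).const_mul _),
    integral_sub (hint _ (by linarith)) ((hint _ (by linarith)).const_mul _),
    integral_const_mul, integral_const_mul, integral_rpow (Or.inl (by linarith)),
    integral_rpow (Or.inl (by linarith)), integral_rpow (Or.inl (by linarith)),
    zero_rpow (by linarith), zero_rpow (by linarith), zero_rpow (by linarith),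
    show α + 1 + 1 = α + 2 by ring, show α - 1 + 1 = α by ring,
    rpow_add' hT (by linarith), rpow_add' hT (by linarith), rpow_two, rpow_one]
  field_simp
  ring

theorem integral_sub_rpow_mul_sub_mul_sub {α T : ℝ} (hα : 0 < α) (hT : 0 ≤ T) (p q : ℝ) :
    ∫ l in (0 : ℝ)..T, (T - l) ^ (α - 1) * ((l - (T - p)) * (l - (T - q)))
      = T ^ α * (T ^ 2 / (α + 2) - (p + q) * T / (α + 1) + p * q / α) := by
  have := integral_comp_sub_left (a := 0) (b := T)
    (fun x : ℝ => x ^ (α - 1) * ((x - p) * (x - q))) T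
  simp only [sub_self, sub_zero] at this
  rw [← integral_rpow_mul_sub_mul_sub hα hT, ← this]
  congr 1
  funext l
  ring

/-- The minimum over `s` of `1/(α+2) - 3s/(α+1) + 2s²/α`, attained at `s = 3α / (4(α+1))`. -/
noncomputable def errorConstant (α : ℝ) : ℝ :=
  1 / (α + 2) - 9 * α / (8 * (α + 1) ^ 2)

theorem errorConstant_pos {α : ℝ} (hα : -1 < α) (hα2 : α < 2) : 0 < errorConstant α := by
  have hnum : errorConstant α = (2 - α) * (4 + α) / (8 * (α + 1) ^ 2 * (α + 2)) := by
    unfold errorConstant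
    field_simp [show α + 2 ≠ 0 by linarith, show α + 1 ≠ 0 by linarith]
    ring
  rw [hnum]
  apply div_pos (mul_pos (by linarith) (by linarith))
  exact mul_pos (by nlinarith) (by linarith)

theorem errorConstant_mul_sq_le {α : ℝ} (hα : 0 < α) (T h : ℝ) :
    errorConstant α * T ^ 2 ≤ T ^ 2 / (α + 2) - 3 * h * T / (α + 1) + 2 * h ^ 2 / α := by
  have hgap : T ^ 2 / (α + 2) - 3 * h * T / (α + 1) + 2 * h ^ 2 / α - errorConstant α * T ^ 2
      = (4 * (α + 1) * h - 3 * α * T) ^ 2 / (8 * α * (α + 1) ^ 2) := by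
    unfold errorConstant
    field_simp
    ring
  have : 0 ≤ (4 * (α + 1) * h - 3 * α * T) ^ 2 / (8 * α * (α + 1) ^ 2) := by positivity
  linarith

/-- There is a `C²` function with second derivative bounded by `1` for which the
error of the global linear-interpolant product-integration rule is at least
`c · t_{n+1}^{2+α}`, with `c > 0` depending only on `α`. -/
theorem quadrature_error_lower_bound_exists
    (α : ℝ) (hα : 0 < α) (hα1 : α < 1) :
    ∃ c > (0:ℝ), ∀ h : ℝ, 0 < h → ∀ n : ℕ, 1 ≤ n →
      ∃ f : ℝ → ℝ,
        (∀ l, f l = (l - (n : ℝ) * h) * (l - ((n : ℝ) - 1) * h) / 2) ∧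
        ContDiff ℝ 2 f ∧
        (∀ x, |iteratedDeriv 2 f x| ≤ 1) ∧
        |(1 / Real.Gamma α) *
            ∫ l in (0:ℝ)..((n + 1 : ℝ) * h), ((n + 1 : ℝ) * h - l) ^ (α - 1) *
              (f l - (f ((n : ℝ) * h) * (l - ((n : ℝ) - 1) * h) / h
                      - f (((n : ℝ) - 1) * h) * (l - (n : ℝ) * h) / h))|
          ≥ c * ((n + 1 : ℝ) * h) ^ (2 + α) := by
  have hΓ : 0 < Gamma α := Gamma_pos_of_pos hα
  refine ⟨errorConstant α / (2 * Gamma α),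
    div_pos (errorConstant_pos (by linarith) (by linarith)) (by positivity),
    fun h hh n hn => ⟨_, fun l => rfl, ?_, ?_, ?_⟩⟩
  · fun_prop
  · intro x
    rw [iteratedDeriv_two_mul_sub_div_two, abs_one]
  set T : ℝ := (n + 1 : ℝ) * h
  have hT : 0 < T := by positivity
  have herror : ∫ l in (0:ℝ)..T, (T - l) ^ (α - 1) *
        ((l - n * h) * (l - (n - 1) * h) / 2 -
          ((n * h - n * h) * (n * h - (n - 1) * h) / 2 * (l - (n - 1) * h) / h
            - ((n - 1) * h - n * h) * ((n - 1) * h - (n - 1) * h) / 2 * (l - n * h) / h))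
      = T ^ α * (T ^ 2 / (α + 2) - 3 * h * T / (α + 1) + 2 * h ^ 2 / α) / 2 := by
    have hvanish : ∀ l : ℝ, (T - l) ^ (α - 1) *
        ((l - n * h) * (l - (n - 1) * h) / 2 -
          ((n * h - n * h) * (n * h - (n - 1) * h) / 2 * (l - (n - 1) * h) / h
            - ((n - 1) * h - n * h) * ((n - 1) * h - (n - 1) * h) / 2 * (l - n * h) / h))
        = (T - l) ^ (α - 1) * ((l - (T - h)) * (l - (T - 2 * h))) / 2 := fun l => by ring
    simp only [hvanish]
    rw [integral_div, integral_sub_rpow_mul_sub_mul_sub hα hT.le]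
    ring
  have hTα : T ^ (2 + α) = T ^ α * T ^ 2 := by
    rw [add_comm, rpow_add hT, rpow_two]
  rw [herror, hTα, ge_iff_le]
  refine le_trans ?_ (le_abs_self _)
  have := mul_le_mul_of_nonneg_left (errorConstant_mul_sq_le hα T h) (rpow_pos_of_pos hT α).le
  calc errorConstant α / (2 * Gamma α) * (T ^ α * T ^ 2)
      = 1 / Gamma α * (T ^ α * (errorConstant α * T ^ 2) / 2) := by ring
    _ ≤ _ := by gcongr
end

section
/- For α ∈ (0,1), λ ∈ ℝ, and y0 ∈ ℝ, the function y(t) = E_α(λ t^α) y0, where E_α(z) = Σ_{k=0}^∞ z^k / Γ(αk + 1) is the Mittag-Leffler function, satisfies the Volterra integral equation y(t) = y0 + (λ/Γ(α)) ∫_0^t (t−s)^{α−1} y(s) ds for all t ≥ 0. -/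
/-!
Expanding `E_α(λ s^α) = Σ λ^k s^{αk} / Γ(αk+1)` and integrating term by term, the beta integral
`∫₀ᵗ (t-s)^{α-1} s^{αk} ds = Γ(αk+1) Γ(α) / Γ(α(k+1)+1) · t^{α(k+1)}` sends the `k`-th term of
the series, multiplied by `λ / Γ(α)`, to its `(k+1)`-st term. Hence
`(λ/Γ(α)) ∫₀ᵗ (t-s)^{α-1} E_α(λ s^α) ds` is the series without its constant term,
`E_α(λ t^α) - 1`. The termwise integration is legitimate because the kernel and the powers are
nonnegative, so the series of absolute values is the same computation with `|λ|`; it converges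
since `Γ(y+1) ≥ X^y e^{-X}` makes the terms decay geometrically.
-/

open Real intervalIntegral

noncomputable def mittagLeffler (α x : ℝ) : ℝ :=
  ∑' k : ℕ, x ^ k / Real.Gamma (α * k + 1)

open MeasureTheory Set

theorem rpow_mul_exp_neg_le_Gamma_add_one {X y : ℝ} (hX : 0 ≤ X) (hy : 0 ≤ y) :
    X ^ y * exp (-X) ≤ Gamma (y + 1) := by
  have hint : IntegrableOn (fun x => exp (-x) * x ^ y) (Ioi 0) := by
    simpa using GammaIntegral_convergent (s := y + 1) (by linarith)
  calc X ^ y * exp (-X) = ∫ x in Ioi X, exp (-x) * X ^ y := by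
        rw [MeasureTheory.integral_mul_const, integral_exp_neg_Ioi, mul_comm]
    _ ≤ ∫ x in Ioi X, exp (-x) * x ^ y := by
        refine setIntegral_mono_on ((integrableOn_exp_neg_Ioi X).mul_const _)
          (hint.mono_set (Ioi_subset_Ioi hX)) measurableSet_Ioi fun x hx => ?_
        gcongr
        exact hx.le
    _ ≤ ∫ x in Ioi 0, exp (-x) * x ^ y :=
        setIntegral_mono_set hint
          (ae_restrict_of_forall_mem measurableSet_Ioi fun x hx =>
            mul_nonneg (exp_pos _).le (rpow_nonneg hx.le _))
          (Ioi_subset_Ioi hX).eventuallyLE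
    _ = Gamma (y + 1) := by rw [Gamma_eq_integral (by linarith), add_sub_cancel_right]

theorem summable_pow_div_Gamma {α β : ℝ} (hα : 0 < α) (hβ : 1 ≤ β) (x : ℝ) :
    Summable fun k : ℕ => x ^ k / Gamma (α * k + β) := by
  set X := (2 * |x| + 1) ^ α⁻¹
  have hX : 0 < X := by positivity
  have hXα : X ^ α = 2 * |x| + 1 := by
    rw [← rpow_mul (by positivity), inv_mul_cancel₀ hα.ne', rpow_one]
  have hratio : |x| / X ^ α ≤ 1 / 2 := by
    rw [hXα, div_le_iff₀ (by positivity)]; linarith [abs_nonneg x]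
  refine Summable.of_norm_bounded (g := fun k => exp X * X ^ (1 - β) * (1 / 2) ^ k)
    ((summable_geometric_two).mul_left _) fun k => ?_
  have hy : 0 ≤ α * k + β - 1 := by linarith [mul_nonneg hα.le k.cast_nonneg]
  have hΓ := rpow_mul_exp_neg_le_Gamma_add_one hX.le hy
  rw [sub_add_cancel] at hΓ
  have hsplit : X ^ (α * k + β - 1) = (X ^ α) ^ k / X ^ (1 - β) := by
    rw [show α * k + β - 1 = α * k - (1 - β) by ring, rpow_sub hX, rpow_mul hX.le, rpow_natCast]
  calc ‖x ^ k / Gamma (α * k + β)‖ = |x| ^ k / Gamma (α * k + β) := by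
        rw [norm_div, norm_pow, Real.norm_eq_abs,
          Real.norm_of_nonneg (Gamma_pos_of_pos (by linarith)).le]
    _ ≤ |x| ^ k / (X ^ (α * k + β - 1) * exp (-X)) := by gcongr
    _ = exp X * X ^ (1 - β) * (|x| / X ^ α) ^ k := by
        rw [hsplit, exp_neg, div_pow]; field_simp
    _ ≤ exp X * X ^ (1 - β) * (1 / 2) ^ k := by gcongr

theorem integral_rpow_mul_sub_rpow {p q t : ℝ} (hp : 0 < p) (hq : 0 < q) (ht : 0 < t) :
    ∫ s in (0:ℝ)..t, s ^ (p - 1) * (t - s) ^ (q - 1)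
      = Gamma p * Gamma q / Gamma (p + q) * t ^ (p + q - 1) := by
  apply Complex.ofReal_injective
  have hbeta := Complex.betaIntegral_scaled p q ht
  rw [Complex.betaIntegral_eq_Gamma_mul_div _ _ (by simpa) (by simpa)] at hbeta
  rw [← intervalIntegral.integral_ofReal]
  calc ∫ s in (0:ℝ)..t, ((s ^ (p - 1) * (t - s) ^ (q - 1) : ℝ) : ℂ)
      = ∫ s in (0:ℝ)..t, (s : ℂ) ^ ((p : ℂ) - 1) * ((t : ℂ) - s) ^ ((q : ℂ) - 1) := by
        refine integral_congr fun s hs => ?_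
        rw [uIcc_of_le ht.le] at hs
        push_cast [Complex.ofReal_cpow hs.1, Complex.ofReal_cpow (sub_nonneg.2 hs.2)]
        rfl
    _ = _ := by
        rw [hbeta, mul_comm]
        push_cast [Complex.ofReal_cpow ht.le, ← Complex.Gamma_ofReal]
        rfl

theorem intervalIntegral.integral_tsum_mul_of_nonneg {a b : ℝ} (hab : a ≤ b) {g : ℕ → ℝ → ℝ}
    (c : ℕ → ℝ) (hg : ∀ k, IntervalIntegrable (g k) volume a b)
    (hg0 : ∀ k, ∀ x ∈ Ioc a b, 0 ≤ g k x)
    (hsum : Summable fun k => |c k| * ∫ x in a..b, g k x) :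
    ∫ x in a..b, ∑' k, c k * g k x = ∑' k, c k * ∫ x in a..b, g k x := by
  simp only [integral_of_le hab] at hsum ⊢
  have hnorm : ∀ k, ∫ x in Ioc a b, ‖c k * g k x‖ = |c k| * ∫ x in Ioc a b, g k x := by
    intro k
    rw [← MeasureTheory.integral_const_mul]
    refine setIntegral_congr_fun measurableSet_Ioc fun x hx => ?_
    rw [norm_mul, Real.norm_eq_abs, Real.norm_of_nonneg (hg0 k x hx)]
  rw [← integral_tsum_of_summable_integral_norm (fun k => (hg k).1.const_mul (c k))
    (by simpa only [hnorm] using hsum)]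
  simp only [MeasureTheory.integral_const_mul]

theorem mittagLeffler_zero (α : ℝ) : mittagLeffler α 0 = 1 := by
  rw [mittagLeffler, tsum_eq_single 0 fun k hk => by rw [zero_pow hk, zero_div]]
  simp

theorem intervalIntegrable_sub_rpow_mul_rpow_pow {α : ℝ} (hα : 0 < α) (t : ℝ) (k : ℕ) :
    IntervalIntegrable (fun s => (t - s) ^ (α - 1) * (s ^ α) ^ k) volume 0 t := by
  have hker : IntervalIntegrable (fun s : ℝ => (t - s) ^ (α - 1)) volume 0 t := by
    simpa using ((intervalIntegral.intervalIntegrable_rpow' (a := 0) (b := t) (r := α - 1)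
      (by linarith)).comp_sub_left t).symm
  exact hker.mul_continuousOn ((continuous_rpow_const hα.le).pow k).continuousOn

theorem integral_sub_rpow_mul_rpow_pow {α t : ℝ} (hα : 0 < α) (ht : 0 < t) (k : ℕ) :
    ∫ s in (0:ℝ)..t, (t - s) ^ (α - 1) * (s ^ α) ^ k
      = Gamma (α * k + 1) * Gamma α / Gamma (α * (k + 1) + 1) * (t ^ α) ^ (k + 1) := by
  have hbeta := integral_rpow_mul_sub_rpow (p := α * k + 1) (q := α) (by positivity) hα ht
  rw [add_sub_cancel_right, show α * k + 1 + α = α * (k + 1) + 1 by ring,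
    show α * (k + 1) + 1 - 1 = α * ((k + 1 : ℕ) : ℝ) by push_cast; ring, rpow_mul ht.le,
    rpow_natCast] at hbeta
  rw [← hbeta]
  refine integral_congr fun s hs => ?_
  rw [uIcc_of_le ht.le] at hs
  simp only [← rpow_natCast, ← rpow_mul hs.1]
  ring

theorem div_Gamma_mul_integral_sub_rpow_mul_mittagLeffler {α lam t : ℝ} (hα : 0 < α)
    (ht : 0 ≤ t) :
    lam / Gamma α * ∫ s in (0:ℝ)..t, (t - s) ^ (α - 1) * mittagLeffler α (lam * s ^ α)
      = mittagLeffler α (lam * t ^ α) - 1 := by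
  rcases ht.eq_or_lt with rfl | ht
  · simp [zero_rpow hα.ne', mittagLeffler_zero]
  have hΓα : 0 < Gamma α := Gamma_pos_of_pos hα
  have hΓ (k : ℕ) : 0 < Gamma (α * k + 1) := Gamma_pos_of_pos (by positivity)
  have hterm (c : ℝ) (k : ℕ) : c ^ k / Gamma (α * k + 1) *
      ∫ s in (0:ℝ)..t, (t - s) ^ (α - 1) * (s ^ α) ^ k
        = Gamma α * (t ^ α * ((c * t ^ α) ^ k / Gamma (α * k + (α + 1)))) := by
    rw [integral_sub_rpow_mul_rpow_pow hα ht, show α * (k + 1) + 1 = α * k + (α + 1) by ring]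
    field_simp [(hΓ k).ne']
    ring
  have hseries : (fun s => (t - s) ^ (α - 1) * mittagLeffler α (lam * s ^ α)) = fun s =>
      ∑' k : ℕ, lam ^ k / Gamma (α * k + 1) * ((t - s) ^ (α - 1) * (s ^ α) ^ k) := by
    ext s
    rw [mittagLeffler, ← tsum_mul_left]
    refine tsum_congr fun k => ?_
    ring
  rw [hseries, intervalIntegral.integral_tsum_mul_of_nonneg ht.le _
    (intervalIntegrable_sub_rpow_mul_rpow_pow hα t) ?nonneg ?summable]
  case nonneg =>
    intro k s hs
    exact mul_nonneg (rpow_nonneg (sub_nonneg.2 hs.2) _) (pow_nonneg (rpow_nonneg hs.1.le _) _)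
  case summable =>
    have habs (k : ℕ) : |lam ^ k / Gamma (α * k + 1)| = |lam| ^ k / Gamma (α * k + 1) := by
      rw [abs_div, abs_pow, abs_of_pos (hΓ k)]
    simp only [habs, hterm]
    exact ((summable_pow_div_Gamma hα (by linarith) _).mul_left _).mul_left _
  simp only [hterm]
  rw [tsum_mul_left, ← mul_assoc, div_mul_cancel₀ _ hΓα.ne', mittagLeffler,
    (summable_pow_div_Gamma hα le_rfl _).tsum_eq_zero_add, ← tsum_mul_left]
  simp only [CharP.cast_eq_zero, mul_zero, zero_add, pow_zero, Gamma_one, div_one,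
    add_sub_cancel_left]
  refine tsum_congr fun k => ?_
  rw [Nat.cast_succ, show α * (k + 1 : ℝ) + 1 = α * k + (α + 1) by ring]
  ring

theorem mittagLeffler_solves_volterra_general
    (α lam y0 : ℝ) (hα : 0 < α) :
    ∀ t : ℝ, 0 ≤ t →
      mittagLeffler α (lam * t ^ α) * y0
        = y0 + (lam / Real.Gamma α) *
            ∫ s in (0:ℝ)..t, (t - s) ^ (α - 1) * (mittagLeffler α (lam * s ^ α) * y0) := by
  intro t ht
  have hvolterra := div_Gamma_mul_integral_sub_rpow_mul_mittagLeffler (lam := lam) hα ht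
  simp only [← mul_assoc, intervalIntegral.integral_mul_const]
  linear_combination (-y0) * hvolterra

/-- `y(t) = E_α(λ t^α) y0` solves the Volterra integral equation associated with
the linear Caputo problem `D^α y = λ y`, `y(0) = y0`. -/
theorem mittagLeffler_solves_volterra
    (α lam y0 : ℝ) (hα : 0 < α) (hα1 : α < 1) :
    ∀ t : ℝ, 0 ≤ t →
      mittagLeffler α (lam * t ^ α) * y0
        = y0 + (lam / Real.Gamma α) *
            ∫ s in (0:ℝ)..t, (t - s) ^ (α - 1) * (mittagLeffler α (lam * s ^ α) * y0) :=
  mittagLeffler_solves_volterra_general α lam y0 hα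
end

section
/- Let α ∈ (0,1), h > 0, t_j = jh. Define the weight a_n = (1/(hΓ(α)))[ (2h/(α(α+1))) t_{n+1}^α − t_{n−1} t_{n+1}^α/(α+1) − (h/α) t_n^α + t_n^{α+1}/(α+1) ] and b_n = (1/(hΓ(α)))[ t_{n+1}^{α+1}/(α+1) − (h/α) t_{n+1}^α − t_n^{α+1}/(α+1) ]. Then for the linear interpolant P(λ) = F_n (λ−t_{n−1})/h − F_{n−1}(λ−t_n)/h (with arbitrary reals F_n, F_{n−1}), one has (1/Γ(α)) ∫_0^{t_{n+1}} (t_{n+1}−λ)^{α−1} P(λ) dλ − (1/Γ(α)) ∫_0^{t_n} (t_n−λ)^{α−1} P(λ) dλ = a_n F_n + b_n F_{n−1}. -/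
open Real intervalIntegral

lemma ao_key (α T A B : ℝ) (hα : 0 < α) (hα1 : α < 1) (hT : 0 ≤ T) :
    (∫ l in (0:ℝ)..T, (T - l) ^ (α - 1) * (A * l + B))
      = (A * T + B) * T ^ α / α - A * T ^ (α + 1) / (α + 1) := by
  have hsub : (∫ l in (0:ℝ)..T, (T - l) ^ (α - 1) * (A * l + B))
      = ∫ x in (0:ℝ)..T, x ^ (α - 1) * (A * (T - x) + B) := by
    have := intervalIntegral.integral_comp_sub_left
      (a := (0:ℝ)) (b := T) (fun x => x ^ (α - 1) * (A * (T - x) + B)) T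
    simp only [sub_zero, sub_self] at this
    rw [← this]
    congr 1
    ext l
    ring_nf
  rw [hsub]
  have hcong : ∀ x ∈ Set.uIcc (0:ℝ) T,
      x ^ (α - 1) * (A * (T - x) + B) = (A * T + B) * x ^ (α - 1) - A * x ^ α := by
    intro x hx
    rw [Set.uIcc_of_le hT] at hx
    rcases eq_or_lt_of_le hx.1 with h0 | h0
    · rw [← h0, Real.zero_rpow (by linarith), Real.zero_rpow (by linarith)]
      ring
    · have : x ^ α = x ^ (α - 1) * x := by
        rw [← Real.rpow_add_one (ne_of_gt h0)]; ring_nf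
      rw [this]; ring
  rw [intervalIntegral.integral_congr hcong]
  have hi1 : IntervalIntegrable (fun x : ℝ => x ^ (α - 1)) MeasureTheory.volume 0 T :=
    intervalIntegral.intervalIntegrable_rpow' (by linarith)
  have hi2 : IntervalIntegrable (fun x : ℝ => x ^ α) MeasureTheory.volume 0 T :=
    intervalIntegral.intervalIntegrable_rpow' (by linarith)
  rw [intervalIntegral.integral_sub (hi1.const_mul _) (hi2.const_mul _),
    intervalIntegral.integral_const_mul, intervalIntegral.integral_const_mul,
    integral_rpow (Or.inl (by linarith)), integral_rpow (Or.inl (by linarith))]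
  rw [Real.zero_rpow (by linarith), Real.zero_rpow (by linarith)]
  rw [sub_add_cancel]
  ring

/-- The corrected closed-form weights of the Atangana–Owolabi scheme: exactly
integrating the linear interpolant against the two Riemann–Liouville kernels and
subtracting gives `a_n F_n + b_n F_{n-1}`. -/
theorem atangana_owolabi_weights
    (α h : ℝ) (hα : 0 < α) (hα1 : α < 1) (hh : 0 < h)
    (n : ℕ) (hn : 1 ≤ n) (Fn Fnm1 : ℝ) :
    (1 / Real.Gamma α) *
        (∫ l in (0:ℝ)..((n + 1 : ℝ) * h), ((n + 1 : ℝ) * h - l) ^ (α - 1) *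
            (Fn * (l - ((n : ℝ) - 1) * h) / h - Fnm1 * (l - (n : ℝ) * h) / h))
      - (1 / Real.Gamma α) *
        (∫ l in (0:ℝ)..((n : ℝ) * h), ((n : ℝ) * h - l) ^ (α - 1) *
            (Fn * (l - ((n : ℝ) - 1) * h) / h - Fnm1 * (l - (n : ℝ) * h) / h))
      = (1 / (h * Real.Gamma α)) *
          (2 * h / (α * (α + 1)) * ((n + 1 : ℝ) * h) ^ α
            - ((n : ℝ) - 1) * h * ((n + 1 : ℝ) * h) ^ α / (α + 1)
            - h / α * ((n : ℝ) * h) ^ α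
            + ((n : ℝ) * h) ^ (α + 1) / (α + 1)) * Fn
        + (1 / (h * Real.Gamma α)) *
          (((n + 1 : ℝ) * h) ^ (α + 1) / (α + 1)
            - h / α * ((n + 1 : ℝ) * h) ^ α
            - ((n : ℝ) * h) ^ (α + 1) / (α + 1)) * Fnm1 := by
  have hh' : h ≠ 0 := ne_of_gt hh
  have hn1 : (1:ℝ) ≤ (n:ℝ) := by exact_mod_cast hn
  set A : ℝ := (Fn - Fnm1) / h with hA
  set B : ℝ := Fnm1 * (n:ℝ) - Fn * ((n:ℝ) - 1) with hB
  have hP : ∀ l : ℝ,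
      Fn * (l - ((n : ℝ) - 1) * h) / h - Fnm1 * (l - (n : ℝ) * h) / h = A * l + B := by
    intro l; rw [hA, hB]; field_simp; ring
  have hT1 : (0:ℝ) ≤ ((n:ℝ) + 1) * h := by positivity
  have hT0 : (0:ℝ) ≤ (n:ℝ) * h := by positivity
  have e1 : (∫ l in (0:ℝ)..((n + 1 : ℝ) * h), ((n + 1 : ℝ) * h - l) ^ (α - 1) *
      (Fn * (l - ((n : ℝ) - 1) * h) / h - Fnm1 * (l - (n : ℝ) * h) / h))
      = (A * ((n + 1 : ℝ) * h) + B) * ((n + 1 : ℝ) * h) ^ α / α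
        - A * ((n + 1 : ℝ) * h) ^ (α + 1) / (α + 1) := by
    rw [← ao_key α ((n + 1 : ℝ) * h) A B hα hα1 hT1]
    congr 1; ext l; rw [hP]
  have e0 : (∫ l in (0:ℝ)..((n : ℝ) * h), ((n : ℝ) * h - l) ^ (α - 1) *
      (Fn * (l - ((n : ℝ) - 1) * h) / h - Fnm1 * (l - (n : ℝ) * h) / h))
      = (A * ((n : ℝ) * h) + B) * ((n : ℝ) * h) ^ α / α
        - A * ((n : ℝ) * h) ^ (α + 1) / (α + 1) := by
    rw [← ao_key α ((n : ℝ) * h) A B hα hα1 hT0]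
    congr 1; ext l; rw [hP]
  rw [e1, e0, hA, hB]
  have r1 : ((n + 1 : ℝ) * h) ^ (α + 1) = ((n + 1 : ℝ) * h) ^ α * ((n + 1 : ℝ) * h) := by
    rw [Real.rpow_add_one (by positivity)]
  have r0 : ((n : ℝ) * h) ^ (α + 1) = ((n : ℝ) * h) ^ α * ((n : ℝ) * h) := by
    rw [Real.rpow_add_one (by positivity)]
  rw [r1, r0]
  have hG : Real.Gamma α ≠ 0 := Real.Gamma_ne_zero (by
    intro m; rcases m with _ | m
    · simpa using ne_of_gt hα
    · push_cast; intro hc; linarith)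
  have hα' : α ≠ 0 := ne_of_gt hα
  have hα1' : α + 1 ≠ 0 := by linarith
  field_simp
  ring
end
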